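/- Let f be the log partition function of a convex body K ⊆ R^n contained in a Euclidean ball of radius R and containing a ball of radius r, with Hessian Σ(θ), and let ϑ be the complexity parameter of the entropic barrier f* (so that ‖θ‖_θ² ≤ ϑ for all θ). Then for any θ with Euclidean norm ‖θ‖ ≤ 1/(4R), λ_min(Σ(θ)) ≥ (1/16)(r/(n+1))², and for ‖θ‖ > 1/(4R), λ_min(Σ(θ)) ≥ (1/64)(1/(4R‖θ‖))^{4√ϑ+2}(r/(n+1))². -/

import Mathlib

/-!
Self-concordance with `‖θ₁ - θ₀‖_{θ₀} ≤ 1/2` gives `‖v‖_{θ₁} ≥ ‖v‖_{θ₀} / 2`. Near the origin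
one such step from `θ = 0` suffices, since `‖θ‖_0 ≤ 2R‖θ‖`. Far from the origin write `θ = C η`
with `‖η‖ = 1/(4R)` and walk along the ray from `η` to `θ` by factors `1 + 1/(2√ϑ)`: each step
has local length at most `‖θ'‖_{θ'} / (2√ϑ) ≤ 1/2`, and `(1 + 1/(2√ϑ))^(2√ϑ+1) ≥ e ≥ 2`, so
about `(2√ϑ+1) log₂ C` steps reach `θ`, each losing a factor `2`.
-/

open MeasureTheory
open scoped RealInnerProductSpace

/-- The Boltzmann distribution on `K` with parameter `θ`. -/
noncomputable def boltzmann {n : ℕ} (K : Set (EuclideanSpace ℝ (Fin n)))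
    (θ : EuclideanSpace ℝ (Fin n)) : Measure (EuclideanSpace ℝ (Fin n)) :=
  let ν := (volume.restrict K).withDensity fun x => ENNReal.ofReal (Real.exp ⟪θ, x⟫)
  (ν Set.univ)⁻¹ • ν

/-- The mean of a measure on Euclidean space. -/
noncomputable def meanVec {n : ℕ} (μ : Measure (EuclideanSpace ℝ (Fin n))) :
    EuclideanSpace ℝ (Fin n) := ∫ x, x ∂μ

/-- The covariance bilinear form of a measure; for the Boltzmann distribution with
parameter `θ` this is the Hessian `Σ(θ)` of the log partition function. -/
noncomputable def covForm {n : ℕ} (μ : Measure (EuclideanSpace ℝ (Fin n)))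
    (v w : EuclideanSpace ℝ (Fin n)) : ℝ :=
  ∫ x, ⟪x - meanVec μ, v⟫ * ⟪x - meanVec μ, w⟫ ∂μ

/-- Local norm `‖v‖_θ = √(vᵀ Σ(θ) v)` for the log partition function of `K`. -/
noncomputable def lnorm {n : ℕ} (K : Set (EuclideanSpace ℝ (Fin n)))
    (θ v : EuclideanSpace ℝ (Fin n)) : ℝ :=
  Real.sqrt (covForm (boltzmann K θ) v v)

open Real

lemma exp_one_le_one_add_inv_rpow {x : ℝ} (hx : 0 < x) :
    exp 1 ≤ (1 + x⁻¹) ^ (x + 1) := by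
  have hlog : 1 - (1 + x⁻¹)⁻¹ ≤ log (1 + x⁻¹) := one_sub_inv_le_log_of_pos (by positivity)
  have hx1 : (x + 1) * (1 - (1 + x⁻¹)⁻¹) = 1 := by field_simp; ring
  rw [rpow_def_of_pos (by positivity), exp_le_exp]
  calc (1 : ℝ) = (x + 1) * (1 - (1 + x⁻¹)⁻¹) := hx1.symm
    _ ≤ (x + 1) * log (1 + x⁻¹) := by gcongr
    _ = log (1 + x⁻¹) * (x + 1) := mul_comm _ _

section LocalNorm

variable {E : Type*} [AddCommGroup E] {N : E → E → ℝ}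

def SelfConcordantBelow (N : E → E → ℝ) : Prop :=
  ∀ θ₀ θ₁ v, N θ₀ (θ₁ - θ₀) < 1 → (1 - N θ₀ (θ₁ - θ₀)) * N θ₀ v ≤ N θ₁ v

lemma div_two_le_of_le_half (hN : ∀ θ v, 0 ≤ N θ v) (hsc : SelfConcordantBelow N)
    {θ₀ θ₁ : E} (h : N θ₀ (θ₁ - θ₀) ≤ 1 / 2) (v : E) : N θ₀ v / 2 ≤ N θ₁ v := by
  have := hsc θ₀ θ₁ v (by linarith)
  nlinarith [hN θ₀ v]

lemma div_two_le_smul_of_le_one_add_mul [Module ℝ E] (hN : ∀ θ v, 0 ≤ N θ v)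
    (hsmul : ∀ θ (t : ℝ) v, N θ (t • v) = |t| * N θ v)
    (hsc : SelfConcordantBelow N) {δ : ℝ} (hδ : ∀ θ, δ * N θ θ ≤ 1 / 2)
    {t₀ t : ℝ} (ht₀ : 0 < t₀) (ht₀t : t₀ ≤ t)
    (ht : t ≤ (1 + δ) * t₀) (η v : E) : N (t₀ • η) v / 2 ≤ N (t • η) v := by
  refine div_two_le_of_le_half hN hsc ?_ v
  have hdiff : t • η - t₀ • η = ((t - t₀) / t₀) • (t₀ • η) := by
    rw [smul_smul, div_mul_cancel₀ _ ht₀.ne', sub_smul]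
  rw [hdiff, hsmul, abs_of_nonneg (div_nonneg (sub_nonneg.2 ht₀t) ht₀.le)]
  calc (t - t₀) / t₀ * N (t₀ • η) (t₀ • η) ≤ δ * N (t₀ • η) (t₀ • η) := by
        gcongr
        · exact hN _ _
        · rw [div_le_iff₀ ht₀]; linarith
    _ ≤ 1 / 2 := hδ _

lemma half_pow_mul_le_smul [Module ℝ E] (hN : ∀ θ v, 0 ≤ N θ v)
    (hsmul : ∀ θ (t : ℝ) v, N θ (t • v) = |t| * N θ v)
    (hsc : SelfConcordantBelow N)
    {δ : ℝ} (hδ0 : 0 ≤ δ) (hδ : ∀ θ, δ * N θ θ ≤ 1 / 2) (η v : E) :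
    ∀ (m : ℕ) (t : ℝ), 1 ≤ t → t ≤ (1 + δ) ^ m → (1 / 2) ^ m * N η v ≤ N (t • η) v
  | 0, t, h1, ht => by
    rw [pow_zero] at ht
    rw [le_antisymm ht h1, pow_zero, one_mul, one_smul]
  | m + 1, t, h1, ht => by
    -- the previous point on the ray, clamped at `η`
    set t₀ := max 1 (t / (1 + δ))
    have hδ1 : 0 < 1 + δ := by linarith
    have hprev := half_pow_mul_le_smul hN hsmul hsc hδ0 hδ η v m t₀ (le_max_left _ _)
      (max_le (one_le_pow₀ (by linarith)) (by rwa [div_le_iff₀ hδ1, ← pow_succ]))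
    have ht₀t : t₀ ≤ t := max_le h1 (div_le_self (by linarith) (by linarith))
    have hlast := div_two_le_smul_of_le_one_add_mul hN hsmul hsc hδ
      (one_pos.trans_le (le_max_left _ _)) ht₀t
      (by rw [← div_le_iff₀' hδ1]; exact le_max_right _ _) η v
    calc (1 / 2) ^ (m + 1) * N η v = (1 / 2) ^ m * N η v / 2 := by ring
      _ ≤ N (t₀ • η) v / 2 := by linarith
      _ ≤ N (t • η) v := hlast

lemma inv_rpow_mul_div_two_le_smul [Module ℝ E] (hN : ∀ θ v, 0 ≤ N θ v)
    (hsmul : ∀ θ (t : ℝ) v, N θ (t • v) = |t| * N θ v)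
    (hsc : SelfConcordantBelow N)
    {s : ℝ} (hs : 0 < s) (hbound : ∀ θ, N θ θ ≤ s) {C : ℝ} (hC : 1 ≤ C) (η v : E) :
    C⁻¹ ^ (2 * s + 1) * N η v / 2 ≤ N (C • η) v := by
  set δ := (2 * s)⁻¹
  have hδ0 : 0 < δ := by positivity
  have hδ : ∀ θ, δ * N θ θ ≤ 1 / 2 := fun θ => calc
    δ * N θ θ ≤ δ * s := by gcongr; exact hbound θ
    _ = 1 / 2 := by simp only [δ]; field_simp
  obtain ⟨m, hmC, hCm⟩ := exists_nat_pow_near hC (by linarith : 1 < 1 + δ)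
  have hray := half_pow_mul_le_smul hN hsmul hsc hδ0.le hδ η v (m + 1) C hC hCm.le
  have hpow : (2 : ℝ) ^ m ≤ C ^ (2 * s + 1) := calc
    (2 : ℝ) ^ m ≤ exp 1 ^ m := by gcongr; exact exp_one_gt_two.le
    _ ≤ ((1 + δ) ^ (2 * s + 1)) ^ m := by
      gcongr; exact exp_one_le_one_add_inv_rpow (by positivity)
    _ = ((1 + δ) ^ m) ^ (2 * s + 1) := rpow_pow_comm (by positivity) _ _
    _ ≤ C ^ (2 * s + 1) := by gcongr
  have hinv : C⁻¹ ^ (2 * s + 1) ≤ (1 / 2) ^ m := by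
    rw [inv_rpow (by linarith), one_div, inv_pow]
    exact inv_anti₀ (by positivity) hpow
  calc C⁻¹ ^ (2 * s + 1) * N η v / 2 ≤ (1 / 2) ^ m * N η v / 2 := by gcongr; exact hN η v
    _ = (1 / 2) ^ (m + 1) * N η v := by ring
    _ ≤ N (C • η) v := hray

end LocalNorm

section NormedLocalNorm

variable {E : Type*} [SeminormedAddCommGroup E] {N : E → E → ℝ}

lemma div_two_mul_norm_le_of_mul_norm_le_half (hN : ∀ θ v, 0 ≤ N θ v)
    (hsc : SelfConcordantBelow N)
    {l L : ℝ} (h0 : ∀ v, l * ‖v‖ ≤ N 0 v) (hmax : ∀ θ v, N θ v ≤ L * ‖v‖)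
    {θ : E} (hθ : L * ‖θ‖ ≤ 1 / 2) (v : E) : l / 2 * ‖v‖ ≤ N θ v := by
  have := div_two_le_of_le_half hN hsc (θ₀ := 0) (θ₁ := θ)
    (by rw [sub_zero]; exact (hmax 0 θ).trans hθ) v
  linarith [h0 v]

lemma rpow_mul_div_four_mul_norm_le [NormedSpace ℝ E] (hN : ∀ θ v, 0 ≤ N θ v)
    (hsmul : ∀ θ (t : ℝ) v, N θ (t • v) = |t| * N θ v)
    (hsc : SelfConcordantBelow N)
    {l L s : ℝ} (hl : 0 < l) (hL : 0 < L) (h0 : ∀ v, l * ‖v‖ ≤ N 0 v)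
    (hmax : ∀ θ v, N θ v ≤ L * ‖v‖) (hbound : ∀ θ, N θ θ ≤ s)
    {θ : E} (hθ : 1 < 2 * L * ‖θ‖) (v : E) :
    (1 / (2 * L * ‖θ‖)) ^ (2 * s + 1) * (l / 4 * ‖v‖) ≤ N θ v := by
  have hθ0 : 0 < ‖θ‖ := pos_of_mul_pos_right (one_pos.trans hθ) (by positivity)
  set C := 2 * L * ‖θ‖
  have hC : 0 < C := one_pos.trans hθ
  have hθC : θ = C • C⁻¹ • θ := by rw [smul_smul, mul_inv_cancel₀ hC.ne', one_smul]
  have hη : L * ‖C⁻¹ • θ‖ = 1 / 2 := by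
    rw [norm_smul, norm_inv, Real.norm_of_nonneg hC.le]
    field_simp
    ring
  have hnear := div_two_mul_norm_le_of_mul_norm_le_half hN hsc h0 hmax hη.le
  have hη0 : 0 < ‖C⁻¹ • θ‖ := by
    rw [norm_smul, norm_inv, Real.norm_of_nonneg hC.le]; positivity
  have hs : 0 < s := calc
    0 < l / 2 * ‖C⁻¹ • θ‖ := by positivity
    _ ≤ N (C⁻¹ • θ) (C⁻¹ • θ) := hnear _
    _ ≤ s := hbound _
  have hfar := inv_rpow_mul_div_two_le_smul hN hsmul hsc hs hbound hθ.le (C⁻¹ • θ) v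
  rw [← hθC] at hfar
  calc (1 / C) ^ (2 * s + 1) * (l / 4 * ‖v‖)
      = C⁻¹ ^ (2 * s + 1) * (l / 2 * ‖v‖) / 2 := by rw [one_div]; ring
    _ ≤ C⁻¹ ^ (2 * s + 1) * N (C⁻¹ • θ) v / 2 := by gcongr; exact hnear v
    _ ≤ N θ v := hfar

end NormedLocalNorm

section Boltzmann

variable {n : ℕ}

lemma covForm_self_nonneg (μ : Measure (EuclideanSpace ℝ (Fin n)))
    (v : EuclideanSpace ℝ (Fin n)) : 0 ≤ covForm μ v v :=
  integral_nonneg fun _ => mul_self_nonneg _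

lemma covForm_smul (μ : Measure (EuclideanSpace ℝ (Fin n))) (t : ℝ)
    (v : EuclideanSpace ℝ (Fin n)) : covForm μ (t • v) (t • v) = t ^ 2 * covForm μ v v := by
  rw [covForm, covForm, ← integral_const_mul]
  congr 1 with x
  rw [real_inner_smul_right]
  ring

variable (K : Set (EuclideanSpace ℝ (Fin n)))

lemma lnorm_nonneg (θ v : EuclideanSpace ℝ (Fin n)) : 0 ≤ lnorm K θ v := sqrt_nonneg _

lemma sq_lnorm (θ v : EuclideanSpace ℝ (Fin n)) :
    lnorm K θ v ^ 2 = covForm (boltzmann K θ) v v :=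
  sq_sqrt (covForm_self_nonneg _ _)

lemma lnorm_smul (θ : EuclideanSpace ℝ (Fin n)) (t : ℝ) (v : EuclideanSpace ℝ (Fin n)) :
    lnorm K θ (t • v) = |t| * lnorm K θ v := by
  rw [lnorm, lnorm, covForm_smul, sqrt_mul (sq_nonneg t), sqrt_sq_eq_abs]

lemma sq_le_covForm_of_le_lnorm {θ v : EuclideanSpace ℝ (Fin n)} {b : ℝ} (hb : 0 ≤ b)
    (h : b ≤ lnorm K θ v) : b ^ 2 ≤ covForm (boltzmann K θ) v v := by
  rw [← sq_lnorm]
  exact pow_le_pow_left₀ hb h 2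

end Boltzmann

theorem stmt14_general (n : ℕ) (r R ϑ : ℝ) (hr : 0 < r) (hrR : r ≤ R)
    (K : Set (EuclideanSpace ℝ (Fin n)))
    -- `ϑ` is the complexity parameter of the entropic barrier: `‖θ‖_θ² ≤ ϑ` for all `θ`
    (hϑ : ∀ θ : EuclideanSpace ℝ (Fin n), (lnorm K θ θ) ^ 2 ≤ ϑ)
    -- available facts: `λ_min(Σ(0)) ≥ (1/4)(r/(n+1))²`, `λ_max(Σ(θ)) ≤ 4R²`, and
    -- the self-concordance of the log partition function of `K`
    (hlam0 : ∀ v : EuclideanSpace ℝ (Fin n),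
      (1 / 4) * (r / (n + 1)) ^ 2 * ‖v‖ ^ 2 ≤ covForm (boltzmann K 0) v v)
    (hlamax : ∀ θ v : EuclideanSpace ℝ (Fin n),
      covForm (boltzmann K θ) v v ≤ 4 * R ^ 2 * ‖v‖ ^ 2)
    (hsc : ∀ θ₀ θ₁ v : EuclideanSpace ℝ (Fin n), lnorm K θ₀ (θ₁ - θ₀) < 1 →
      (1 - lnorm K θ₀ (θ₁ - θ₀)) * lnorm K θ₀ v ≤ lnorm K θ₁ v ∧
        lnorm K θ₁ v ≤ lnorm K θ₀ v / (1 - lnorm K θ₀ (θ₁ - θ₀))) :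
    ∀ θ : EuclideanSpace ℝ (Fin n),
      (‖θ‖ ≤ 1 / (4 * R) →
        ∀ v, (1 / 16) * (r / (n + 1)) ^ 2 * ‖v‖ ^ 2 ≤ covForm (boltzmann K θ) v v) ∧
      (1 / (4 * R) < ‖θ‖ →
        ∀ v, (1 / 64) * (1 / (4 * R * ‖θ‖)) ^ ((4 : ℝ) * Real.sqrt ϑ + 2) *
          (r / (n + 1)) ^ 2 * ‖v‖ ^ 2 ≤ covForm (boltzmann K θ) v v) := by
  have hR : 0 < R := hr.trans_le hrR
  set a := r / ((n : ℝ) + 1)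
  have ha : 0 < a := by positivity
  have hsc' : SelfConcordantBelow (lnorm K) := fun θ₀ θ₁ v h => (hsc θ₀ θ₁ v h).1
  have h0 : ∀ v, a / 2 * ‖v‖ ≤ lnorm K 0 v := fun v =>
    le_sqrt_of_sq_le (by linarith [hlam0 v])
  have hmax : ∀ θ v, lnorm K θ v ≤ 2 * R * ‖v‖ := fun θ v =>
    (sqrt_le_left (by positivity)).2 (by linarith [hlamax θ v])
  intro θ
  refine ⟨fun hθ v => ?_, fun hθ v => ?_⟩
  · have hθ' : 2 * R * ‖θ‖ ≤ 1 / 2 := by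
      rw [le_div_iff₀ (by positivity)] at hθ; linarith
    have hnear := div_two_mul_norm_le_of_mul_norm_le_half (lnorm_nonneg K) hsc' h0 hmax hθ' v
    linarith [sq_le_covForm_of_le_lnorm K (by positivity) hnear]
  · have hθ' : 1 < 2 * (2 * R) * ‖θ‖ := by
      rw [div_lt_iff₀ (by positivity)] at hθ; linarith
    have hfar := rpow_mul_div_four_mul_norm_le (lnorm_nonneg K) (lnorm_smul K) hsc'
      (half_pos ha) (by positivity) h0 hmax (fun θ => le_sqrt_of_sq_le (hϑ θ)) hθ' v
    rw [show 2 * (2 * R) = 4 * R by ring] at hfar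
    have hexp : (1 / (4 * R * ‖θ‖)) ^ (4 * √ϑ + 2) =
        ((1 / (4 * R * ‖θ‖)) ^ (2 * √ϑ + 1)) ^ 2 := by
      rw [← rpow_mul_natCast (by positivity)]
      congr 1
      push_cast
      ring
    calc _ = ((1 / (4 * R * ‖θ‖)) ^ (2 * √ϑ + 1) * (a / 2 / 4 * ‖v‖)) ^ 2 := by
          rw [hexp]; ring
      _ ≤ _ := sq_le_covForm_of_le_lnorm K (by positivity) hfar

theorem stmt14 (n : ℕ) (r R ϑ : ℝ) (hr : 0 < r) (hrR : r ≤ R)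
    (K : Set (EuclideanSpace ℝ (Fin n)))
    (hKconv : Convex ℝ K) (hKcomp : IsCompact K) (hKint : (interior K).Nonempty)
    (c c' : EuclideanSpace ℝ (Fin n))
    (hballin : Metric.closedBall c r ⊆ K) (hballout : K ⊆ Metric.closedBall c' R)
    -- `ϑ` is the complexity parameter of the entropic barrier: `‖θ‖_θ² ≤ ϑ` for all `θ`
    (hϑ : ∀ θ : EuclideanSpace ℝ (Fin n), (lnorm K θ θ) ^ 2 ≤ ϑ)
    -- available facts: `λ_min(Σ(0)) ≥ (1/4)(r/(n+1))²`, `λ_max(Σ(θ)) ≤ 4R²`, and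
    -- the self-concordance of the log partition function of `K`
    (hlam0 : ∀ v : EuclideanSpace ℝ (Fin n),
      (1 / 4) * (r / (n + 1)) ^ 2 * ‖v‖ ^ 2 ≤ covForm (boltzmann K 0) v v)
    (hlamax : ∀ θ v : EuclideanSpace ℝ (Fin n),
      covForm (boltzmann K θ) v v ≤ 4 * R ^ 2 * ‖v‖ ^ 2)
    (hsc : ∀ θ₀ θ₁ v : EuclideanSpace ℝ (Fin n), lnorm K θ₀ (θ₁ - θ₀) < 1 →
      (1 - lnorm K θ₀ (θ₁ - θ₀)) * lnorm K θ₀ v ≤ lnorm K θ₁ v ∧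
        lnorm K θ₁ v ≤ lnorm K θ₀ v / (1 - lnorm K θ₀ (θ₁ - θ₀))) :
    ∀ θ : EuclideanSpace ℝ (Fin n),
      (‖θ‖ ≤ 1 / (4 * R) →
        ∀ v, (1 / 16) * (r / (n + 1)) ^ 2 * ‖v‖ ^ 2 ≤ covForm (boltzmann K θ) v v) ∧
      (1 / (4 * R) < ‖θ‖ →
        ∀ v, (1 / 64) * (1 / (4 * R * ‖θ‖)) ^ ((4 : ℝ) * Real.sqrt ϑ + 2) *
          (r / (n + 1)) ^ 2 * ‖v‖ ^ 2 ≤ covForm (boltzmann K θ) v v) :=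
  stmt14_general n r R ϑ hr hrR K hϑ hlam0 hlamax hsc
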